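/- Let G be a bipartite looped-free simple graph with vertex classes V₁ and V₂, with V₂ written in terms of the biadjacency matrix A₁ (rows indexed by V₁, columns by V₂). Then M[IA(G)] is isomorphic to the direct sum M ⊕ M*, where M is the binary matroid represented by (I | A₁). -/

import Mathlib

/-- Adjacency matrix over GF(2) of the bipartite simple graph with classes `V₁, V₂` and
biadjacency matrix `A₁ : Matrix V₁ V₂`. -/
def bipAdj {V₁ V₂ : Type} (A₁ : Matrix V₁ V₂ (ZMod 2)) :
    Matrix (V₁ ⊕ V₂) (V₁ ⊕ V₂) (ZMod 2)
  | Sum.inl i, Sum.inr j => A₁ i j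
  | Sum.inr j, Sum.inl i => A₁ i j
  | _, _ => 0

/-- Columns of a matrix `IA = (I | B)` over GF(2). -/
def iaCol {V : Type} [DecidableEq V] (B : Matrix V V (ZMod 2)) :
    V ⊕ V → V → ZMod 2
  | Sum.inl v => fun w => if w = v then 1 else 0
  | Sum.inr v => fun w => B w v

/-- Independence in `M[IA(G)]`. -/
def iaIndep {V : Type} [DecidableEq V] (B : Matrix V V (ZMod 2))
    (S : Set (V ⊕ V)) : Prop :=
  LinearIndependent (ZMod 2) (S.restrict (iaCol B))

/-- Columns of the matrix `(I | A₁)`, the representation of the binary matroid `M`: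
`Sum.inl i` is the `i`-th identity column, `Sum.inr j` the `j`-th column of `A₁`. -/
def bimCol {V₁ V₂ : Type} [DecidableEq V₁] (A₁ : Matrix V₁ V₂ (ZMod 2)) :
    V₁ ⊕ V₂ → V₁ → ZMod 2
  | Sum.inl i => fun w => if w = i then 1 else 0
  | Sum.inr j => fun w => A₁ w j

/-- Independence in the binary matroid `M` represented by `(I | A₁)`. -/
def bimIndep {V₁ V₂ : Type} [DecidableEq V₁] (A₁ : Matrix V₁ V₂ (ZMod 2))
    (S : Set (V₁ ⊕ V₂)) : Prop :=
  LinearIndependent (ZMod 2) (S.restrict (bimCol A₁))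

/-- Bases of `M`. -/
def bimBasis {V₁ V₂ : Type} [DecidableEq V₁] (A₁ : Matrix V₁ V₂ (ZMod 2))
    (Bs : Set (V₁ ⊕ V₂)) : Prop :=
  bimIndep A₁ Bs ∧ ∀ B', Bs ⊆ B' → bimIndep A₁ B' → B' = Bs

/-- Independence in the dual matroid `M*`: a set is independent in the dual iff it is
disjoint from some basis of `M`. -/
def bimDualIndep {V₁ V₂ : Type} [DecidableEq V₁] (A₁ : Matrix V₁ V₂ (ZMod 2))
    (S : Set (V₁ ⊕ V₂)) : Prop :=
  ∃ Bs, bimBasis A₁ Bs ∧ Disjoint S Bs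

/-!
Relabel the ground set by exchanging the two copies of `V₂`. The columns of
`IA(G) = (I | A(G))` supported on `V₁` then form `(I | A₁)`, and those supported on `V₂` form
`(A₁ᵀ | I)`; as the two groups live in complementary coordinate subspaces, `M[IA(G)]` is the
direct sum of the two column matroids. Over GF(2), `(A₁ᵀ | I) = (-A₁ᵀ | I)` represents `M*`: its
space of linear relations is the row space of `(I | A₁)`, so a set `Q` of its columns is
independent iff the columns of `(I | A₁)` outside `Q` span, i.e. iff `Q` avoids a basis of `M`.
-/

open Set Submodule Module

section LinearIndepOn

variable {ι K V W : Type*} [Field K] [AddCommGroup V] [Module K V] [AddCommGroup W] [Module K W]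

theorem Fintype.linearIndepOn_iff {R M : Type*} [Fintype ι] [Ring R]
    [AddCommGroup M] [Module R M] {v : ι → M} {s : Set ι} :
    LinearIndepOn R v s ↔ ∀ g : ι → R, (∀ i ∉ s, g i = 0) → ∑ i, g i • v i = 0 → g = 0 := by
  classical
  have sum_eq (t : Finset ι) (g : ι → R) (hg : ∀ i ∉ t, g i = 0) :
      ∑ i ∈ t, g i • v i = ∑ i, g i • v i :=
    Finset.sum_subset (Finset.subset_univ t) fun i _ hi => by rw [hg i hi, zero_smul]
  rw [linearIndepOn_iff'']
  constructor
  · intro h g hg h0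
    funext i
    by_cases hi : i ∈ s
    · refine h s.toFinset g (by simp) (by simpa using hg) ?_ i (by simpa)
      rwa [sum_eq _ _ (by simpa using hg)]
    · exact hg i hi
  · intro h t g hts hgt h0 i _
    refine congrFun (h g (fun i hi => hgt i fun hit => hi (hts hit)) ?_) i
    rwa [← sum_eq t g hgt]

theorem maximal_linearIndepOn_iff {v : ι → V} (hv : span K (range v) = ⊤) {B : Set ι} :
    Maximal (LinearIndepOn K v) B ↔ LinearIndepOn K v B ∧ span K (v '' B) = ⊤ := by
  rw [Set.maximal_iff_forall_insert fun _ _ ht hst => ht.mono hst, and_congr_right_iff]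
  intro hB
  rw [eq_top_iff, ← hv, span_le, range_subset_iff]
  refine ⟨fun h x => ?_, fun h x hx hins => ((linearIndepOn_insert hx).1 hins).2 (h x)⟩
  by_cases hx : x ∈ B
  · exact subset_span (mem_image_of_mem v hx)
  · simpa [linearIndepOn_insert hx, hB] using h x hx

theorem span_eq_top_iff_forall_dual {S : Set V} :
    span K S = ⊤ ↔ ∀ φ : Dual K V, (∀ x ∈ S, φ x = 0) → φ = 0 := by
  rw [← dualAnnihilator_eq_bot_iff, Submodule.eq_bot_iff]
  refine forall_congr' fun φ => imp_congr_left ?_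
  rw [mem_dualAnnihilator]
  exact span_le (p := LinearMap.ker φ)

theorem exists_maximal_linearIndepOn_disjoint_iff {v : ι → V} (hv : span K (range v) = ⊤)
    {Q : Set ι} :
    (∃ B, Maximal (LinearIndepOn K v) B ∧ Disjoint Q B) ↔ span K (v '' Qᶜ) = ⊤ := by
  constructor
  · rintro ⟨B, hB, hQB⟩
    rw [eq_top_iff, ← ((maximal_linearIndepOn_iff hv).1 hB).2]
    exact span_mono (image_mono hQB.subset_compl_left)
  · intro hQ
    obtain ⟨B, hBQ, -, hspan, hB⟩ :=
      exists_linearIndepOn_extension (linearIndepOn_empty K v) (empty_subset Qᶜ)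
    refine ⟨B, (maximal_linearIndepOn_iff hv).2 ⟨hB, ?_⟩, disjoint_compl_right.mono_right hBQ⟩
    rw [eq_top_iff, ← hQ]
    exact span_le.2 hspan

theorem linearIndepOn_iff_span_image_compl_eq_top [Fintype ι] {v : ι → V} {w : ι → W}
    (hv : span K (range v) = ⊤)
    (hvw : ∀ g : ι → K, ∑ i, g i • w i = 0 ↔ ∃ φ : Dual K V, ⇑φ ∘ v = g) {Q : Set ι} :
    LinearIndepOn K w Q ↔ span K (v '' Qᶜ) = ⊤ := by
  rw [Fintype.linearIndepOn_iff, span_eq_top_iff_forall_dual]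
  constructor
  · intro h φ hφ
    have hφv : ⇑φ ∘ v = 0 := h _ (fun i hi => hφ _ (mem_image_of_mem v hi)) ((hvw _).2 ⟨φ, rfl⟩)
    exact LinearMap.ext_on_range hv fun i => congrFun hφv i
  · rintro h g hg hsum
    obtain ⟨φ, rfl⟩ := (hvw g).1 hsum
    rw [h φ (forall_mem_image.2 hg)]
    rfl

theorem linearIndepOn_sumElim_inl_inr_iff {α β R M M' : Type*} [Ring R] [AddCommGroup M]
    [Module R M] [AddCommGroup M'] [Module R M'] {u : α → M} {u' : β → M'} {T : Set (α ⊕ β)} :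
    LinearIndepOn R (Sum.elim (LinearMap.inl R M M' ∘ u) (LinearMap.inr R M M' ∘ u')) T ↔
      LinearIndepOn R u (Sum.inl ⁻¹' T) ∧ LinearIndepOn R u' (Sum.inr ⁻¹' T) := by
  set F := Sum.elim (LinearMap.inl R M M' ∘ u) (LinearMap.inr R M M' ∘ u')
  have hinl : span R (F '' (Sum.inl '' (Sum.inl ⁻¹' T))) ≤ LinearMap.range (LinearMap.inl R M M') :=
    span_le.2 <| by rintro _ ⟨_, ⟨a, -, rfl⟩, rfl⟩; exact ⟨u a, rfl⟩
  have hinr : span R (F '' (Sum.inr '' (Sum.inr ⁻¹' T))) ≤ LinearMap.range (LinearMap.inr R M M') :=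
    span_le.2 <| by rintro _ ⟨_, ⟨b, -, rfl⟩, rfl⟩; exact ⟨u' b, rfl⟩
  conv_lhs => rw [← image_preimage_inl_union_image_preimage_inr T]
  rw [linearIndepOn_union_iff Set.disjoint_image_inl_image_inr,
    and_iff_left (LinearMap.disjoint_inl_inr.mono hinl hinr)]
  have image_inl : LinearIndepOn R F (Sum.inl '' (Sum.inl ⁻¹' T)) ↔
      LinearIndepOn R (LinearMap.inl R M M' ∘ u) (Sum.inl ⁻¹' T) :=
    ⟨fun h => h.comp_of_image Sum.inl_injective.injOn, .image_of_comp Sum.inl F⟩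
  have image_inr : LinearIndepOn R F (Sum.inr '' (Sum.inr ⁻¹' T)) ↔
      LinearIndepOn R (LinearMap.inr R M M' ∘ u') (Sum.inr ⁻¹' T) :=
    ⟨fun h => h.comp_of_image Sum.inr_injective.injOn, .image_of_comp Sum.inr F⟩
  rw [image_inl, image_inr, LinearMap.linearIndepOn_iff_of_injOn _ LinearMap.inl_injective.injOn,
    LinearMap.linearIndepOn_iff_of_injOn _ LinearMap.inr_injective.injOn]

end LinearIndepOn

namespace BipartiteIA

variable {V₁ V₂ : Type} (A₁ : Matrix V₁ V₂ (ZMod 2))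

def dualCol [DecidableEq V₂] : V₁ ⊕ V₂ → V₂ → ZMod 2
  | Sum.inl i => fun j => A₁ i j
  | Sum.inr j => Pi.single j 1

theorem bimCol_inl [DecidableEq V₁] (i : V₁) : bimCol A₁ (Sum.inl i) = Pi.single i 1 := by
  funext w
  simp [bimCol, Pi.single_apply]

theorem bimCol_inr_eq_sum [Fintype V₁] [DecidableEq V₁] (j : V₂) :
    bimCol A₁ (Sum.inr j) = ∑ i, A₁ i j • bimCol A₁ (Sum.inl i) := by
  simp_rw [bimCol_inl]
  exact pi_eq_sum_univ' _

theorem span_range_bimCol [Fintype V₁] [DecidableEq V₁] :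
    span (ZMod 2) (range (bimCol A₁)) = ⊤ := by
  rw [eq_top_iff, ← (Pi.basisFun (ZMod 2) V₁).span_eq]
  refine span_mono (range_subset_iff.2 fun i => ⟨Sum.inl i, ?_⟩)
  rw [bimCol_inl, Pi.basisFun_apply]

theorem sum_smul_dualCol_eq_zero_iff [Fintype V₁] [Fintype V₂] [DecidableEq V₂]
    (g : V₁ ⊕ V₂ → ZMod 2) :
    ∑ e, g e • dualCol A₁ e = 0 ↔ ∀ j, g (Sum.inr j) = ∑ i, g (Sum.inl i) * A₁ i j := by
  rw [funext_iff]
  refine forall_congr' fun j => ?_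
  simp only [dualCol, Finset.sum_apply, Pi.smul_apply, smul_eq_mul, Fintype.sum_sum_type,
    Pi.single_apply, mul_ite, mul_one, mul_zero, Finset.sum_ite_eq, Finset.mem_univ, ↓reduceIte,
    Pi.zero_apply]
  rw [CharTwo.add_eq_zero, eq_comm]

theorem exists_dual_comp_bimCol_iff [Fintype V₁] [DecidableEq V₁] (g : V₁ ⊕ V₂ → ZMod 2) :
    (∃ φ : Dual (ZMod 2) (V₁ → ZMod 2), ⇑φ ∘ bimCol A₁ = g) ↔
      ∀ j, g (Sum.inr j) = ∑ i, g (Sum.inl i) * A₁ i j := by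
  constructor
  · rintro ⟨φ, rfl⟩ j
    simp [bimCol_inr_eq_sum, mul_comm]
  · intro h
    refine ⟨∑ i, g (Sum.inl i) • LinearMap.proj i, funext ?_⟩
    rintro (i | j) <;> simp [bimCol, h]

theorem bimBasis_iff_maximal [DecidableEq V₁] {B : Set (V₁ ⊕ V₂)} :
    bimBasis A₁ B ↔ Maximal (LinearIndepOn (ZMod 2) (bimCol A₁)) B := by
  rw [bimBasis, maximal_subset_iff]
  exact and_congr_right fun _ => ⟨fun h t ht hBt => (h t hBt ht).symm,
    fun h t hBt ht => (h ht hBt).symm⟩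

theorem bimDualIndep_iff_linearIndepOn_dualCol [Fintype V₁] [Fintype V₂] [DecidableEq V₁]
    [DecidableEq V₂] {Q : Set (V₁ ⊕ V₂)} :
    bimDualIndep A₁ Q ↔ LinearIndepOn (ZMod 2) (dualCol A₁) Q := by
  rw [linearIndepOn_iff_span_image_compl_eq_top (span_range_bimCol A₁) fun g =>
      (sum_smul_dualCol_eq_zero_iff A₁ g).trans (exists_dual_comp_bimCol_iff A₁ g).symm,
    ← exists_maximal_linearIndepOn_disjoint_iff (span_range_bimCol A₁)]
  simp only [bimDualIndep, bimBasis_iff_maximal]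

def swapV₂ : (V₁ ⊕ V₂) ⊕ (V₁ ⊕ V₂) → (V₁ ⊕ V₂) ⊕ (V₁ ⊕ V₂)
  | Sum.inl (Sum.inr j) => Sum.inr (Sum.inr j)
  | Sum.inr (Sum.inr j) => Sum.inl (Sum.inr j)
  | e => e

def groundEquiv : ((V₁ ⊕ V₂) ⊕ (V₁ ⊕ V₂)) ≃ ((V₁ ⊕ V₂) ⊕ (V₁ ⊕ V₂)) :=
  Function.Involutive.toPerm swapV₂ (by rintro ((i | j) | (i | j)) <;> rfl)

theorem comp_iaCol_bipAdj [DecidableEq V₁] [DecidableEq V₂] :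
    ⇑(LinearEquiv.sumArrowLequivProdArrow V₁ V₂ (ZMod 2) (ZMod 2)) ∘ iaCol (bipAdj A₁) =
      Sum.elim (LinearMap.inl (ZMod 2) _ _ ∘ bimCol A₁) (LinearMap.inr (ZMod 2) _ _ ∘ dualCol A₁) ∘
        groundEquiv := by
  funext e
  rcases e with (i | j) | (i | j) <;> ext w <;>
    simp [iaCol, bipAdj, bimCol, dualCol, groundEquiv, Function.Involutive.toPerm, swapV₂,
      Pi.single_apply]

theorem iaIndep_bipAdj_iff [DecidableEq V₁] [DecidableEq V₂]
    (S : Set ((V₁ ⊕ V₂) ⊕ (V₁ ⊕ V₂))) :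
    iaIndep (bipAdj A₁) S ↔ bimIndep A₁ (Sum.inl ⁻¹' (groundEquiv '' S)) ∧
      LinearIndepOn (ZMod 2) (dualCol A₁) (Sum.inr ⁻¹' (groundEquiv '' S)) := by
  let e := LinearEquiv.sumArrowLequivProdArrow V₁ V₂ (ZMod 2) (ZMod 2)
  change LinearIndepOn (ZMod 2) (iaCol (bipAdj A₁)) S ↔ LinearIndepOn (ZMod 2) (bimCol A₁) _ ∧ _
  rw [← e.toLinearMap.linearIndepOn_iff_of_injOn e.injective.injOn, LinearEquiv.coe_coe,
    comp_iaCol_bipAdj, linearIndepOn_equiv, linearIndepOn_sumElim_inl_inr_iff]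

end BipartiteIA

/-- Let `G` be the bipartite simple graph with classes `V₁, V₂` and biadjacency matrix
`A₁`, and let `M` be the binary matroid represented by `(I | A₁)`.  Then `M[IA(G)]` is
isomorphic to the direct sum `M ⊕ M*`: there is a bijection `f` of ground sets under
which a set is independent in `M[IA(G)]` iff its part in the first summand is independent
in `M` and its part in the second summand is independent in `M*`. -/
theorem bipartite_ia_direct_sum {V₁ V₂ : Type} [Fintype V₁] [Fintype V₂]
    [DecidableEq V₁] [DecidableEq V₂] (A₁ : Matrix V₁ V₂ (ZMod 2)) :
    ∃ f : ((V₁ ⊕ V₂) ⊕ (V₁ ⊕ V₂)) ≃ ((V₁ ⊕ V₂) ⊕ (V₁ ⊕ V₂)),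
      ∀ S : Set ((V₁ ⊕ V₂) ⊕ (V₁ ⊕ V₂)),
        iaIndep (bipAdj A₁) S ↔
          (bimIndep A₁ (Sum.inl ⁻¹' (f '' S)) ∧ bimDualIndep A₁ (Sum.inr ⁻¹' (f '' S))) := by
  refine ⟨BipartiteIA.groundEquiv, fun S => ?_⟩
  rw [BipartiteIA.iaIndep_bipAdj_iff, BipartiteIA.bimDualIndep_iff_linearIndepOn_dualCol]
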